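/- arXiv:2312.17478 — 2 statements merged into one kernel-verified Lean document; each statement's English description precedes it below -/
import Mathlib

section
/- (Dissipativity of the AVF scheme) Let N̄ be a symmetric negative semi-definite N×N real matrix and E : ℝ^N → ℝ continuously differentiable. Suppose α, β ∈ ℝ^N and Δt > 0 satisfy the AVF update (β − α)/Δt = N̄ ∫₀¹ ∇E((1−ξ)α + ξβ) dξ. Then E(β) ≤ E(α). -/
/-!
The averaged gradient `v = ∫₀¹ ∇E((1-ξ)α + ξβ) dξ` satisfies an exact discrete chain rule:
by the fundamental theorem of calculus along the segment, `E β - E α = ⟪v, β - α⟫`.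
The scheme gives `β - α = Δt • N̄ v`, so this equals `Δt ⟪v, N̄ v⟫ ≤ 0`.
-/

open Matrix RealInnerProductSpace

section Segment

variable {F : Type*} [NormedAddCommGroup F] [InnerProductSpace ℝ F] [CompleteSpace F]

theorem ContDiff.continuous_gradient {E : F → ℝ} (hE : ContDiff ℝ 1 E) :
    Continuous (gradient E) :=
  (InnerProductSpace.toDual ℝ F).symm.continuous.comp (hE.continuous_fderiv one_ne_zero)

theorem sub_eq_inner_integral_gradient_segment {E : F → ℝ} (hE : ContDiff ℝ 1 E) (a b : F) :
    E b - E a = ⟪∫ ξ in (0:ℝ)..1, gradient E ((1 - ξ) • a + ξ • b), b - a⟫ := by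
  set γ : ℝ → F := fun ξ => (1 - ξ) • a + ξ • b
  have hγ : ∀ ξ, HasDerivAt γ (b - a) ξ := fun ξ => by
    have := ((hasDerivAt_id ξ).smul_const (b - a)).const_add a
    convert this using 1
    · funext t; simp only [γ, id]; module
    · simp
  have hderiv : ∀ ξ ∈ Set.uIcc (0:ℝ) 1,
      HasDerivAt (E ∘ γ) ⟪gradient E (γ ξ), b - a⟫ ξ := fun ξ _ => by
    rw [inner_gradient_left]
    exact ((hE.differentiable one_ne_zero _).hasFDerivAt).comp_hasDerivAt ξ (hγ ξ)
  have hcont : Continuous fun ξ => gradient E (γ ξ) :=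
    hE.continuous_gradient.comp (by fun_prop)
  have hftc := intervalIntegral.integral_eq_sub_of_hasDerivAt hderiv
    ((hcont.inner continuous_const).intervalIntegrable 0 1)
  have hpull := (innerSL ℝ (b - a)).intervalIntegral_comp_comm
    (hcont.intervalIntegrable (μ := MeasureTheory.volume) 0 1)
  simp only [innerSL_apply_apply] at hpull
  calc E b - E a = (E ∘ γ) 1 - (E ∘ γ) 0 := by simp [γ]
    _ = ∫ ξ in (0:ℝ)..1, ⟪b - a, gradient E (γ ξ)⟫ := by
      simp only [← hftc, real_inner_comm (b - a)]
    _ = ⟪∫ ξ in (0:ℝ)..1, gradient E (γ ξ), b - a⟫ := by rw [hpull, real_inner_comm]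

end Segment

theorem Matrix.inner_toEuclideanLin_self {n : Type*} [Fintype n] [DecidableEq n]
    (A : Matrix n n ℝ) (v : EuclideanSpace ℝ n) :
    ⟪v, A.toEuclideanLin v⟫ = v.ofLp ⬝ᵥ (A *ᵥ v.ofLp) := by
  rw [EuclideanSpace.inner_eq_star_dotProduct, ofLp_toLpLin, toLin'_apply, star_trivial,
    dotProduct_comm]

theorem inner_sub_nonpos_of_smul_sub_eq {F : Type*} [NormedAddCommGroup F]
    [InnerProductSpace ℝ F] {L : F →ₗ[ℝ] F} (hL : ∀ v, ⟪v, L v⟫ ≤ 0) {a b v : F} {Δt : ℝ}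
    (hΔt : 0 < Δt) (h : Δt⁻¹ • (b - a) = L v) : ⟪v, b - a⟫ ≤ 0 := by
  have hba : b - a = Δt • L v := by
    rw [← h, smul_inv_smul₀ hΔt.ne']
  rw [hba, real_inner_smul_right]
  exact mul_nonpos_of_nonneg_of_nonpos hΔt.le (hL v)

theorem stmt_6_general {N : ℕ} (Nbar : Matrix (Fin N) (Fin N) ℝ)
    (hneg : ∀ x : Fin N → ℝ, x ⬝ᵥ (Nbar *ᵥ x) ≤ 0)
    (E : EuclideanSpace ℝ (Fin N) → ℝ) (hE : ContDiff ℝ 1 E)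
    (α β : EuclideanSpace ℝ (Fin N)) (Δt : ℝ) (hΔt : 0 < Δt)
    (hupdate : (Δt)⁻¹ • (β - α) =
      Matrix.toEuclideanLin Nbar
        (∫ ξ in (0:ℝ)..1, gradient E ((1 - ξ) • α + ξ • β))) :
    E β ≤ E α := by
  have hdissipative : ∀ v, ⟪v, Nbar.toEuclideanLin v⟫ ≤ 0 := fun v =>
    (Nbar.inner_toEuclideanLin_self v).trans_le (hneg v.ofLp)
  have hdecrease := inner_sub_nonpos_of_smul_sub_eq hdissipative hΔt hupdate
  linarith [sub_eq_inner_integral_gradient_segment hE α β]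

/-- Dissipativity of the AVF scheme: if `N̄` is symmetric negative semi-definite,
`E` is `C¹`, and `(β − α)/Δt = N̄ ∫₀¹ ∇E((1−ξ)α + ξβ) dξ`, then `E(β) ≤ E(α)`. -/
theorem stmt_6 {N : ℕ} (Nbar : Matrix (Fin N) (Fin N) ℝ)
    (hsym : Nbar.IsSymm)
    (hneg : ∀ x : Fin N → ℝ, x ⬝ᵥ (Nbar *ᵥ x) ≤ 0)
    (E : EuclideanSpace ℝ (Fin N) → ℝ) (hE : ContDiff ℝ 1 E)
    (α β : EuclideanSpace ℝ (Fin N)) (Δt : ℝ) (hΔt : 0 < Δt)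
    (hupdate : (Δt)⁻¹ • (β - α) =
      Matrix.toEuclideanLin Nbar
        (∫ ξ in (0:ℝ)..1, gradient E ((1 - ξ) • α + ξ • β))) :
    E β ≤ E α :=
  stmt_6_general Nbar hneg E hE α β Δt hΔt hupdate
end

section
/- Let f : ℝ → ℝ be Lipschitz with constant L and let y : [0,T] → ℝ satisfy the AVF fixed-point relation y^{n+1} = y^n + Δt ∫₀¹ f((1−ξ)y^n + ξ y^{n+1}) dξ. If Δt·L < 2, then for fixed y^n the map Φ(z) = y^n + Δt ∫₀¹ f((1−ξ)y^n + ξ z) dξ is a contraction on ℝ with constant Δt·L/2, and hence y^{n+1} exists and is unique. -/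
/-!
At the same `ξ` the two arguments of `f` differ by `ξ(z₁ - z₂)`, so the integrands differ by at
most `Lξ|z₁ - z₂|`, which integrates to `(L/2)|z₁ - z₂|`. When `Δt·L < 2` the map is therefore a
contraction of the complete space `ℝ`, and Banach's fixed point theorem gives existence and
uniqueness of `yⁿ⁺¹`.
-/

open intervalIntegral

section AVF

variable {E : Type*} [NormedAddCommGroup E] [NormedSpace ℝ E]

noncomputable def segmentAverage (f : E → E) (y z : E) : E :=
  ∫ ξ in (0 : ℝ)..1, f ((1 - ξ) • y + ξ • z)

/-- The fixed-point map of one step of the average vector field (AVF) method. -/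
noncomputable def avfMap (f : E → E) (Δt : ℝ) (y z : E) : E :=
  y + Δt • segmentAverage f y z

variable {f : E → E} {K : ℝ}

theorem intervalIntegrable_comp_segment (hf : Continuous f) (y z : E) :
    IntervalIntegrable (fun ξ : ℝ => f ((1 - ξ) • y + ξ • z)) MeasureTheory.volume 0 1 :=
  (hf.comp (by fun_prop)).intervalIntegrable _ _

theorem norm_segmentAverage_sub_le (hf : ∀ x y, ‖f x - f y‖ ≤ K * ‖x - y‖) (y z₁ z₂ : E) :
    ‖segmentAverage f y z₁ - segmentAverage f y z₂‖ ≤ K / 2 * ‖z₁ - z₂‖ := by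
  have hcont : Continuous f :=
    (LipschitzWith.of_dist_le' (by simpa only [dist_eq_norm] using hf)).continuous
  have hpointwise : ∀ ξ ∈ Set.Ioc (0 : ℝ) 1,
      ‖f ((1 - ξ) • y + ξ • z₁) - f ((1 - ξ) • y + ξ • z₂)‖ ≤ K * ‖z₁ - z₂‖ * ξ := by
    intro ξ hξ
    calc _ ≤ K * ‖(1 - ξ) • y + ξ • z₁ - ((1 - ξ) • y + ξ • z₂)‖ := hf _ _
      _ = K * ‖z₁ - z₂‖ * ξ := by
        rw [add_sub_add_left_eq_sub, ← smul_sub, norm_smul, Real.norm_of_nonneg hξ.1.le]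
        ring
  calc ‖segmentAverage f y z₁ - segmentAverage f y z₂‖
      = ‖∫ ξ in (0 : ℝ)..1, (f ((1 - ξ) • y + ξ • z₁) - f ((1 - ξ) • y + ξ • z₂))‖ := by
        rw [segmentAverage, segmentAverage, integral_sub (intervalIntegrable_comp_segment hcont y z₁)
          (intervalIntegrable_comp_segment hcont y z₂)]
    _ ≤ ∫ ξ in (0 : ℝ)..1, K * ‖z₁ - z₂‖ * ξ :=
        norm_integral_le_of_norm_le zero_le_one (Filter.Eventually.of_forall hpointwise)
          ((by fun_prop : Continuous fun ξ : ℝ => K * ‖z₁ - z₂‖ * ξ).intervalIntegrable 0 1)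
    _ = K / 2 * ‖z₁ - z₂‖ := by
        rw [integral_const_mul, integral_id]
        ring

theorem dist_avfMap_le (hf : ∀ x y, ‖f x - f y‖ ≤ K * ‖x - y‖) (Δt : ℝ) (y z₁ z₂ : E) :
    dist (avfMap f Δt y z₁) (avfMap f Δt y z₂) ≤ |Δt| * K / 2 * dist z₁ z₂ := by
  rw [dist_eq_norm, dist_eq_norm, avfMap, avfMap, add_sub_add_left_eq_sub, ← smul_sub, norm_smul,
    Real.norm_eq_abs, mul_div_assoc, mul_assoc]
  exact mul_le_mul_of_nonneg_left (norm_segmentAverage_sub_le hf y z₁ z₂) (abs_nonneg Δt)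

theorem existsUnique_avfMap_fixedPoint [CompleteSpace E] (hf : ∀ x y, ‖f x - f y‖ ≤ K * ‖x - y‖)
    {Δt : ℝ} (hcontr : |Δt| * K / 2 < 1) (y : E) : ∃! z, avfMap f Δt y z = z := by
  have hcontracting : ContractingWith (Real.toNNReal (|Δt| * K / 2)) (avfMap f Δt y) :=
    ⟨by exact_mod_cast Real.toNNReal_lt_one.mpr hcontr,
      LipschitzWith.of_dist_le' (dist_avfMap_le hf Δt y)⟩
  exact ⟨_, hcontracting.fixedPoint_isFixedPt, fun _ hz => hcontracting.fixedPoint_unique hz⟩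

end AVF

theorem stmt_16_general (f : ℝ → ℝ) (L : ℝ)
    (hf : ∀ x y : ℝ, |f x - f y| ≤ L * |x - y|)
    (Δt : ℝ) (hΔt : 0 < Δt) (hcontr : Δt * L < 2)
    (yn : ℝ) (Φ : ℝ → ℝ)
    (hΦ : ∀ z, Φ z = yn + Δt * ∫ ξ in (0:ℝ)..1, f ((1 - ξ) * yn + ξ * z)) :
    (∀ z₁ z₂ : ℝ, |Φ z₁ - Φ z₂| ≤ (Δt * L / 2) * |z₁ - z₂|) ∧
      ∃! z : ℝ, Φ z = z := by
  have hΦ_eq : Φ = avfMap f Δt yn := funext hΦ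
  have hf' : ∀ x y : ℝ, ‖f x - f y‖ ≤ L * ‖x - y‖ := hf
  subst hΦ_eq
  refine ⟨fun z₁ z₂ => ?_, existsUnique_avfMap_fixedPoint hf' (by rw [abs_of_pos hΔt]; linarith) yn⟩
  simpa only [Real.dist_eq, abs_of_pos hΔt] using dist_avfMap_le hf' Δt yn z₁ z₂

/-- Contraction property and unique solvability of the AVF fixed-point map
`Φ(z) = yⁿ + Δt ∫₀¹ f((1−ξ)yⁿ + ξz) dξ` when `Δt·L < 2`. -/
theorem stmt_16 (f : ℝ → ℝ) (L : ℝ) (hL : 0 ≤ L)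
    (hf : ∀ x y : ℝ, |f x - f y| ≤ L * |x - y|)
    (Δt : ℝ) (hΔt : 0 < Δt) (hcontr : Δt * L < 2)
    (yn : ℝ) (Φ : ℝ → ℝ)
    (hΦ : ∀ z, Φ z = yn + Δt * ∫ ξ in (0:ℝ)..1, f ((1 - ξ) * yn + ξ * z)) :
    (∀ z₁ z₂ : ℝ, |Φ z₁ - Φ z₂| ≤ (Δt * L / 2) * |z₁ - z₂|) ∧
      ∃! z : ℝ, Φ z = z :=
  stmt_16_general f L hf Δt hΔt hcontr yn Φ hΦ
end
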